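/- arXiv:1111.3812 — 4 statements merged into one kernel-verified Lean document; each statement's English description precedes it below -/
import Mathlib

section
/- For every r∈(0,1), the function ψ is differentiable at r with derivative ψ'(r) = (π/(1−r²)) · ((1−r)/(E'(r) − rK'(r)))². -/
open Real Set Filter Topology

/-- Complete elliptic integral of the first kind. -/
noncomputable def EK (r : ℝ) : ℝ :=
  ∫ t in (0:ℝ)..(π/2), 1 / Real.sqrt (1 - r^2 * Real.sin t ^ 2)

/-- Complete elliptic integral of the second kind. -/
noncomputable def EE (r : ℝ) : ℝ :=
  ∫ t in (0:ℝ)..(π/2), Real.sqrt (1 - r^2 * Real.sin t ^ 2)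

/-- K'(r) = K(√(1-r²)). -/
noncomputable def EK' (r : ℝ) : ℝ := EK (Real.sqrt (1 - r^2))

/-- E'(r) = E(√(1-r²)). -/
noncomputable def EE' (r : ℝ) : ℝ := EE (Real.sqrt (1 - r^2))

/-- The function ψ. -/
noncomputable def psi (r : ℝ) : ℝ :=
  2 * (EE r - (1 - r) * EK r) / (EE' r - r * EK' r)

/-!
Differentiating under the integral sign gives `dE/dk = (E - K) / k` and
`dK/dk = (E / k'² - K) / k`, where `∫ Δ⁻³ = E / k'²` (with `Δ = √(1 - k² sin² t)`) comes from the
derivative of `k² sin t cos t / Δ`. Hence the numerator `2 (E - (1 - r) K)` of `ψ` has derivative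
`2E / (1 + r)` and the denominator `D = E' - r K'` has derivative `(E' - K') / (1 + r)`, and the
quotient rule together with Legendre's relation `E K' + E' K - K K' = π / 2` gives the formula.
Legendre's relation holds because its left side has derivative zero and tends to `π / 2` as
`r → 0⁺`, the only delicate term being `(K - E) K' = O(r)`. Finally `D > 0` since `D` is strictly
decreasing on `(0, 1]` with `D(1) = E(0) - K(0) = 0`.
-/

open MeasureTheory

theorem hasDerivAt_intervalIntegral_of_continuousOn {F F' : ℝ → ℝ → ℝ} {U : Set ℝ}
    (hU : IsOpen U) {a b x₀ : ℝ} (hx₀ : x₀ ∈ U) (hF : ∀ x ∈ U, Continuous (F x))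
    (hF' : ContinuousOn (Function.uncurry F') (U ×ˢ univ))
    (hderiv : ∀ x ∈ U, ∀ t, HasDerivAt (F · t) (F' x t) x) :
    HasDerivAt (fun x => ∫ t in a..b, F x t) (∫ t in a..b, F' x₀ t) x₀ := by
  obtain ⟨K, hK, hx₀K, hKU⟩ := exists_compact_subset hU hx₀
  have hKU' : K ×ˢ uIcc a b ⊆ U ×ˢ univ := prod_mono hKU (subset_univ _)
  obtain ⟨C, hC⟩ := (hK.prod isCompact_uIcc).exists_bound_of_continuousOn (hF'.mono hKU')
  have hF'x₀ : Continuous (F' x₀) :=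
    hF'.comp_continuous (continuous_const.prodMk continuous_id) fun t => ⟨hx₀, trivial⟩
  refine (intervalIntegral.hasDerivAt_integral_of_dominated_loc_of_deriv_le (bound := fun _ => C)
    (mem_interior_iff_mem_nhds.1 hx₀K) ?_ ((hF x₀ hx₀).intervalIntegrable a b)
    hF'x₀.aestronglyMeasurable ?_ intervalIntegrable_const ?_).2
  · filter_upwards [hU.mem_nhds hx₀] with x hx using (hF x hx).aestronglyMeasurable
  · exact Eventually.of_forall fun t ht x hx => hC (x, t) ⟨hx, uIoc_subset_uIcc ht⟩
  · exact Eventually.of_forall fun t _ x hx => hderiv x (hKU hx) t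

section Modulus

variable {k : ℝ}

lemma sq_mul_sin_sq_le_sq (k t : ℝ) : k ^ 2 * sin t ^ 2 ≤ k ^ 2 :=
  mul_le_of_le_one_right (sq_nonneg k) (sin_sq_le_one t)

lemma one_sub_sq_mul_sin_sq_pos (hk : k ^ 2 < 1) (t : ℝ) : 0 < 1 - k ^ 2 * sin t ^ 2 := by
  linarith [sq_mul_sin_sq_le_sq k t]

lemma sqrt_one_sub_sq_mul_sin_sq_pos (hk : k ^ 2 < 1) (t : ℝ) : 0 < √(1 - k ^ 2 * sin t ^ 2) :=
  sqrt_pos.2 (one_sub_sq_mul_sin_sq_pos hk t)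

lemma sq_sqrt_one_sub_sq_mul_sin_sq (hk : k ^ 2 < 1) (t : ℝ) :
    √(1 - k ^ 2 * sin t ^ 2) ^ 2 = 1 - k ^ 2 * sin t ^ 2 :=
  sq_sqrt (one_sub_sq_mul_sin_sq_pos hk t).le

lemma continuous_sqrt_one_sub_sq_mul_sin_sq (k : ℝ) :
    Continuous fun t => √(1 - k ^ 2 * sin t ^ 2) := by
  fun_prop

lemma continuous_one_div_sqrt_one_sub_sq_mul_sin_sq_pow (hk : k ^ 2 < 1) (n : ℕ) :
    Continuous fun t => 1 / √(1 - k ^ 2 * sin t ^ 2) ^ n :=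
  continuous_const.div (by fun_prop) fun t =>
    pow_ne_zero n (sqrt_one_sub_sq_mul_sin_sq_pos hk t).ne'

lemma continuous_one_div_sqrt_one_sub_sq_mul_sin_sq (hk : k ^ 2 < 1) :
    Continuous fun t => 1 / √(1 - k ^ 2 * sin t ^ 2) := by
  simpa using continuous_one_div_sqrt_one_sub_sq_mul_sin_sq_pow hk 1

lemma hasDerivAt_sqrt_one_sub_sq_mul_sin_sq (hk : k ^ 2 < 1) (t : ℝ) :
    HasDerivAt (fun k => √(1 - k ^ 2 * sin t ^ 2))
      (-(k * sin t ^ 2) / √(1 - k ^ 2 * sin t ^ 2)) k := by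
  have h := ((hasDerivAt_pow 2 k).mul_const (sin t ^ 2)).const_sub 1 |>.sqrt
    (one_sub_sq_mul_sin_sq_pos hk t).ne'
  refine h.congr_deriv ?_
  field_simp
  push_cast
  ring

lemma hasDerivAt_one_div_sqrt_one_sub_sq_mul_sin_sq (hk : k ^ 2 < 1) (t : ℝ) :
    HasDerivAt (fun k => 1 / √(1 - k ^ 2 * sin t ^ 2))
      (k * sin t ^ 2 / √(1 - k ^ 2 * sin t ^ 2) ^ 3) k := by
  have h := (hasDerivAt_const k (1 : ℝ)).div (hasDerivAt_sqrt_one_sub_sq_mul_sin_sq hk t)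
    (sqrt_one_sub_sq_mul_sin_sq_pos hk t).ne'
  refine h.congr_deriv ?_
  have := sqrt_one_sub_sq_mul_sin_sq_pos hk t
  field_simp
  ring

lemma isOpen_setOf_sq_lt_one : IsOpen {k : ℝ | k ^ 2 < 1} :=
  isOpen_lt (by fun_prop) continuous_const

lemma hasDerivAt_EE_integral (hk : k ^ 2 < 1) :
    HasDerivAt EE (∫ t in (0)..(π / 2), -(k * sin t ^ 2) / √(1 - k ^ 2 * sin t ^ 2)) k := by
  refine hasDerivAt_intervalIntegral_of_continuousOn isOpen_setOf_sq_lt_one hk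
    (fun x _ => by fun_prop) ?_ fun x hx t => hasDerivAt_sqrt_one_sub_sq_mul_sin_sq hx t
  exact ContinuousOn.div (by fun_prop) (by fun_prop) fun p hp =>
    (sqrt_one_sub_sq_mul_sin_sq_pos hp.1 p.2).ne'

lemma hasDerivAt_EK_integral (hk : k ^ 2 < 1) :
    HasDerivAt EK (∫ t in (0)..(π / 2), k * sin t ^ 2 / √(1 - k ^ 2 * sin t ^ 2) ^ 3) k := by
  refine hasDerivAt_intervalIntegral_of_continuousOn isOpen_setOf_sq_lt_one hk
    (fun x hx => continuous_one_div_sqrt_one_sub_sq_mul_sin_sq hx) ?_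
    fun x hx t => hasDerivAt_one_div_sqrt_one_sub_sq_mul_sin_sq hx t
  exact ContinuousOn.div (by fun_prop) (by fun_prop) fun p hp =>
    pow_ne_zero 3 (sqrt_one_sub_sq_mul_sin_sq_pos hp.1 p.2).ne'

lemma continuousAt_EK (hk : k ^ 2 < 1) : ContinuousAt EK k :=
  (hasDerivAt_EK_integral hk).continuousAt

lemma continuous_EE : Continuous EE :=
  intervalIntegral.continuous_parametric_intervalIntegral_of_continuous' (by fun_prop) _ _

lemma continuous_EE' : Continuous EE' :=
  continuous_EE.comp (by fun_prop : Continuous fun r : ℝ => √(1 - r ^ 2))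

lemma hasDerivAt_sq_mul_sin_mul_cos_div_sqrt (hk : k ^ 2 < 1) (t : ℝ) :
    HasDerivAt (fun t => k ^ 2 * (sin t * cos t) / √(1 - k ^ 2 * sin t ^ 2))
      (√(1 - k ^ 2 * sin t ^ 2) - (1 - k ^ 2) * (1 / √(1 - k ^ 2 * sin t ^ 2) ^ 3)) t := by
  have hΔ : HasDerivAt (fun t => √(1 - k ^ 2 * sin t ^ 2))
      ((-(k ^ 2 * (2 * sin t ^ 1 * cos t))) / (2 * √(1 - k ^ 2 * sin t ^ 2))) t :=
    (((hasDerivAt_sin t).pow 2).const_mul (k ^ 2)).const_sub 1 |>.sqrt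
      (one_sub_sq_mul_sin_sq_pos hk t).ne'
  refine ((((hasDerivAt_sin t).mul (hasDerivAt_cos t)).const_mul (k ^ 2)).div hΔ
    (sqrt_one_sub_sq_mul_sin_sq_pos hk t).ne').congr_deriv ?_
  have := sqrt_one_sub_sq_mul_sin_sq_pos hk t
  have hsq := sq_sqrt_one_sub_sq_mul_sin_sq hk t
  simp only [Pi.mul_apply]
  field_simp
  linear_combination (k ^ 2 * (cos t ^ 2 - sin t ^ 2) - √(1 - k ^ 2 * sin t ^ 2) ^ 2
    - (1 - k ^ 2 * sin t ^ 2)) * hsq + k ^ 2 * cos_sq' t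

lemma integral_one_div_sqrt_one_sub_sq_mul_sin_sq_pow_three (hk : k ^ 2 < 1) :
    ∫ t in (0)..(π / 2), 1 / √(1 - k ^ 2 * sin t ^ 2) ^ 3 = EE k / (1 - k ^ 2) := by
  have hcont := continuous_one_div_sqrt_one_sub_sq_mul_sin_sq_pow hk 3
  have hE := (continuous_sqrt_one_sub_sq_mul_sin_sq k).intervalIntegrable (μ := volume) 0 (π / 2)
  have hK3 := (hcont.intervalIntegrable (μ := volume) 0 (π / 2)).const_mul (1 - k ^ 2)
  have hftc := intervalIntegral.integral_eq_sub_of_hasDerivAt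
    (fun t _ => hasDerivAt_sq_mul_sin_mul_cos_div_sqrt hk t) (hE.sub hK3)
  rw [intervalIntegral.integral_sub hE hK3, intervalIntegral.integral_const_mul] at hftc
  simp only [cos_pi_div_two, sin_zero, mul_zero, zero_mul, zero_div, sub_zero] at hftc
  rw [eq_div_iff (sub_pos.2 hk).ne']
  change EE k - _ = 0 at hftc
  linarith

lemma hasDerivAt_EE (hk0 : k ≠ 0) (hk : k ^ 2 < 1) :
    HasDerivAt EE ((EE k - EK k) / k) k := by
  convert hasDerivAt_EE_integral hk using 1
  have hpoint (t : ℝ) : -(k * sin t ^ 2) / √(1 - k ^ 2 * sin t ^ 2)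
      = (√(1 - k ^ 2 * sin t ^ 2) - 1 / √(1 - k ^ 2 * sin t ^ 2)) / k := by
    have := sqrt_one_sub_sq_mul_sin_sq_pos hk t
    field_simp
    linear_combination -sq_sqrt_one_sub_sq_mul_sin_sq hk t
  simp_rw [hpoint]
  rw [intervalIntegral.integral_div, intervalIntegral.integral_sub
    ((continuous_sqrt_one_sub_sq_mul_sin_sq k).intervalIntegrable _ _)
    ((continuous_one_div_sqrt_one_sub_sq_mul_sin_sq hk).intervalIntegrable _ _)]
  rfl

lemma hasDerivAt_EK (hk0 : k ≠ 0) (hk : k ^ 2 < 1) :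
    HasDerivAt EK ((EE k / (1 - k ^ 2) - EK k) / k) k := by
  convert hasDerivAt_EK_integral hk using 1
  have hpoint (t : ℝ) : k * sin t ^ 2 / √(1 - k ^ 2 * sin t ^ 2) ^ 3
      = (1 / √(1 - k ^ 2 * sin t ^ 2) ^ 3 - 1 / √(1 - k ^ 2 * sin t ^ 2)) / k := by
    have := sqrt_one_sub_sq_mul_sin_sq_pos hk t
    field_simp
    linear_combination sq_sqrt_one_sub_sq_mul_sin_sq hk t
  simp_rw [hpoint]
  rw [intervalIntegral.integral_div, intervalIntegral.integral_sub
    ((continuous_one_div_sqrt_one_sub_sq_mul_sin_sq_pow hk 3).intervalIntegrable _ _)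
    ((continuous_one_div_sqrt_one_sub_sq_mul_sin_sq hk).intervalIntegrable _ _),
    integral_one_div_sqrt_one_sub_sq_mul_sin_sq_pow_three hk]
  rfl

lemma EE_zero : EE 0 = π / 2 := by simp [EE]

lemma EK_zero : EK 0 = π / 2 := by simp [EK]

lemma EE_one : EE 1 = 1 := by
  have hcos : ∀ t ∈ uIcc 0 (π / 2), √(1 - 1 ^ 2 * sin t ^ 2) = cos t := fun t ht => by
    rw [uIcc_of_le (by positivity)] at ht
    rw [one_pow, one_mul, ← cos_sq',
      sqrt_sq (cos_nonneg_of_mem_Icc ⟨by linarith [pi_pos, ht.1], ht.2⟩)]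
  rw [EE, intervalIntegral.integral_congr hcos, integral_cos, sin_pi_div_two, sin_zero, sub_zero]

lemma EK_nonneg (k : ℝ) : 0 ≤ EK k :=
  intervalIntegral.integral_nonneg (by positivity) fun _ _ => by positivity

lemma EK_sub_EE (hk : k ^ 2 < 1) :
    EK k - EE k = ∫ t in (0)..(π / 2), k ^ 2 * sin t ^ 2 / √(1 - k ^ 2 * sin t ^ 2) := by
  rw [EK, EE, ← intervalIntegral.integral_sub
    ((continuous_one_div_sqrt_one_sub_sq_mul_sin_sq hk).intervalIntegrable _ _)
    ((continuous_sqrt_one_sub_sq_mul_sin_sq k).intervalIntegrable _ _)]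
  refine intervalIntegral.integral_congr fun t _ => ?_
  have := sqrt_one_sub_sq_mul_sin_sq_pos hk t
  field_simp
  linear_combination -sq_sqrt_one_sub_sq_mul_sin_sq hk t

lemma continuous_sq_mul_sin_sq_div_sqrt (hk : k ^ 2 < 1) :
    Continuous fun t => k ^ 2 * sin t ^ 2 / √(1 - k ^ 2 * sin t ^ 2) :=
  (by fun_prop : Continuous fun t => k ^ 2 * sin t ^ 2).div
    (continuous_sqrt_one_sub_sq_mul_sin_sq k) fun t => (sqrt_one_sub_sq_mul_sin_sq_pos hk t).ne'

lemma EE_le_EK (hk : k ^ 2 < 1) : EE k ≤ EK k := by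
  rw [← sub_nonneg, EK_sub_EE hk]
  exact intervalIntegral.integral_nonneg (by positivity) fun t _ =>
    div_nonneg (by positivity) (sqrt_nonneg _)

lemma EE_lt_EK (hk0 : k ≠ 0) (hk : k ^ 2 < 1) : EE k < EK k := by
  rw [← sub_pos, EK_sub_EE hk]
  refine intervalIntegral.intervalIntegral_pos_of_pos_on
    ((continuous_sq_mul_sin_sq_div_sqrt hk).intervalIntegrable _ _) (fun t ht => ?_) (by positivity)
  have hsin : 0 < sin t := sin_pos_of_pos_of_lt_pi ht.1 (by linarith [ht.2, pi_pos])
  exact div_pos (by positivity) (sqrt_one_sub_sq_mul_sin_sq_pos hk t)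

lemma EK_sub_EE_le (hk : k ^ 2 < 1) : EK k - EE k ≤ k ^ 2 * EK k := by
  rw [EK_sub_EE hk, EK, ← intervalIntegral.integral_const_mul]
  refine intervalIntegral.integral_mono_on (by positivity)
    ((continuous_sq_mul_sin_sq_div_sqrt hk).intervalIntegrable _ _)
    (((continuous_one_div_sqrt_one_sub_sq_mul_sin_sq hk).intervalIntegrable _ _).const_mul _)
    fun t _ => ?_
  rw [mul_one_div]
  gcongr
  exact sq_mul_sin_sq_le_sq k t

lemma EK_le (hk : k ^ 2 < 1) : EK k ≤ π / 2 / √(1 - k ^ 2) := by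
  have hpos : 0 < √(1 - k ^ 2) := sqrt_pos.2 (sub_pos.2 hk)
  calc EK k ≤ ∫ _ in (0)..(π / 2), 1 / √(1 - k ^ 2) :=
        intervalIntegral.integral_mono_on (by positivity)
          ((continuous_one_div_sqrt_one_sub_sq_mul_sin_sq hk).intervalIntegrable _ _)
          intervalIntegrable_const fun t _ => by
            gcongr
            exact sq_mul_sin_sq_le_sq k t
    _ = π / 2 / √(1 - k ^ 2) := by simp [div_eq_mul_one_div (π / 2)]

end Modulus

section Complementary

variable {r : ℝ}

lemma sq_sqrt_one_sub_sq (hr : r ^ 2 < 1) : √(1 - r ^ 2) ^ 2 = 1 - r ^ 2 :=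
  sq_sqrt (sub_pos.2 hr).le

lemma sqrt_one_sub_sq_sqrt_one_sub_sq (hr : r ^ 2 < 1) : √(1 - √(1 - r ^ 2) ^ 2) = |r| := by
  rw [sq_sqrt_one_sub_sq hr, sub_sub_cancel, sqrt_sq_eq_abs]

lemma sqrt_one_sub_sq_ne_zero (hr : r ^ 2 < 1) : √(1 - r ^ 2) ≠ 0 :=
  (sqrt_pos.2 (sub_pos.2 hr)).ne'

lemma sq_sqrt_one_sub_sq_lt_one (hr0 : r ≠ 0) (hr : r ^ 2 < 1) : √(1 - r ^ 2) ^ 2 < 1 := by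
  rw [sq_sqrt_one_sub_sq hr]
  linarith [pow_pos (abs_pos.2 hr0) 2, sq_abs r]

lemma hasDerivAt_sqrt_one_sub_sq (hr : r ^ 2 < 1) :
    HasDerivAt (fun x => √(1 - x ^ 2)) (-r / √(1 - r ^ 2)) r := by
  refine ((hasDerivAt_pow 2 r).const_sub 1 |>.sqrt (sub_pos.2 hr).ne').congr_deriv ?_
  have := sqrt_one_sub_sq_ne_zero hr
  field_simp
  ring

lemma hasDerivAt_EE' (hr0 : r ≠ 0) (hr : r ^ 2 < 1) :
    HasDerivAt EE' (-(r * (EE' r - EK' r)) / (1 - r ^ 2)) r := by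
  refine ((hasDerivAt_EE (sqrt_one_sub_sq_ne_zero hr) (sq_sqrt_one_sub_sq_lt_one hr0 hr)).comp r
    (hasDerivAt_sqrt_one_sub_sq hr)).congr_deriv ?_
  have hk := sqrt_one_sub_sq_ne_zero hr
  have hsq := sq_sqrt_one_sub_sq hr
  simp only [EE', EK']
  set k := √(1 - r ^ 2)
  rw [← hsq]
  field_simp

lemma hasDerivAt_EK' (hr0 : r ≠ 0) (hr : r ^ 2 < 1) :
    HasDerivAt EK' (-(EE' r - r ^ 2 * EK' r) / (r * (1 - r ^ 2))) r := by
  refine ((hasDerivAt_EK (sqrt_one_sub_sq_ne_zero hr) (sq_sqrt_one_sub_sq_lt_one hr0 hr)).comp r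
    (hasDerivAt_sqrt_one_sub_sq hr)).congr_deriv ?_
  have hk := sqrt_one_sub_sq_ne_zero hr
  have hsq := sq_sqrt_one_sub_sq hr
  simp only [EE', EK']
  set k := √(1 - r ^ 2)
  have hk' : 1 - k ^ 2 = r ^ 2 := by rw [hsq, sub_sub_cancel]
  rw [hk', ← hsq]
  field_simp

lemma abs_mul_EK'_le (hr0 : r ≠ 0) (hr : r ^ 2 < 1) : |r| * EK' r ≤ π / 2 := by
  have h := EK_le (sq_sqrt_one_sub_sq_lt_one hr0 hr)
  rw [sqrt_one_sub_sq_sqrt_one_sub_sq hr, le_div_iff₀ (abs_pos.2 hr0)] at h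
  rw [EK', mul_comm]
  exact h

lemma tendsto_EK_nhdsGT_zero : Tendsto EK (𝓝[>] 0) (𝓝 (π / 2)) :=
  EK_zero ▸ (continuousAt_EK (by norm_num)).tendsto.mono_left nhdsWithin_le_nhds

lemma tendsto_EE'_nhdsGT_zero : Tendsto EE' (𝓝[>] 0) (𝓝 1) := by
  have h : EE' 0 = 1 := by simp [EE', EE_one]
  exact h ▸ continuous_EE'.continuousAt.tendsto.mono_left nhdsWithin_le_nhds

lemma tendsto_EK_sub_EE_mul_EK'_nhdsGT_zero :
    Tendsto (fun r => (EK r - EE r) * EK' r) (𝓝[>] 0) (𝓝 0) := by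
  have hupper : Tendsto (fun r => r * EK r * (π / 2)) (𝓝[>] 0) (𝓝 0) := by
    simpa using ((tendsto_id.mono_left nhdsWithin_le_nhds).mul tendsto_EK_nhdsGT_zero).mul_const
      (π / 2)
  refine tendsto_of_tendsto_of_tendsto_of_le_of_le' tendsto_const_nhds hupper ?_ ?_
  · filter_upwards [Ioo_mem_nhdsGT (zero_lt_one' ℝ)] with r hr
    have hr2 : r ^ 2 < 1 := by nlinarith [hr.1, hr.2]
    exact mul_nonneg (sub_nonneg.2 (EE_le_EK hr2)) (EK_nonneg _)
  · filter_upwards [Ioo_mem_nhdsGT (zero_lt_one' ℝ)] with r hr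
    have hr2 : r ^ 2 < 1 := by nlinarith [hr.1, hr.2]
    have hrK' : r * EK' r ≤ π / 2 := by
      simpa only [abs_of_pos hr.1] using abs_mul_EK'_le hr.1.ne' hr2
    calc (EK r - EE r) * EK' r ≤ r ^ 2 * EK r * EK' r := by
          gcongr
          · exact EK_nonneg _
          · exact EK_sub_EE_le hr2
      _ = r * EK r * (r * EK' r) := by ring
      _ ≤ r * EK r * (π / 2) := by
          gcongr
          exact mul_nonneg hr.1.le (EK_nonneg r)

lemma hasDerivAt_legendre (hr0 : r ≠ 0) (hr : r ^ 2 < 1) :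
    HasDerivAt (fun r => EE r * EK' r + EE' r * EK r - EK r * EK' r) 0 r := by
  refine (((hasDerivAt_EE hr0 hr).mul (hasDerivAt_EK' hr0 hr)).add
    ((hasDerivAt_EE' hr0 hr).mul (hasDerivAt_EK hr0 hr))).sub
    ((hasDerivAt_EK hr0 hr).mul (hasDerivAt_EK' hr0 hr)) |>.congr_deriv ?_
  have : 1 - r ^ 2 ≠ 0 := (sub_pos.2 hr).ne'
  field_simp
  ring

theorem legendre_relation (hr : r ∈ Ioo 0 1) :
    EE r * EK' r + EE' r * EK r - EK r * EK' r = π / 2 := by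
  set L := fun r => EE r * EK' r + EE' r * EK r - EK r * EK' r
  have hderiv (x : ℝ) (hx : x ∈ Ioo 0 1) : HasDerivAt L 0 x :=
    hasDerivAt_legendre hx.1.ne' (by nlinarith [hx.1, hx.2])
  obtain ⟨c, hc⟩ := isOpen_Ioo.exists_is_const_of_deriv_eq_zero isPreconnected_Ioo
    (fun x hx => (hderiv x hx).differentiableAt.differentiableWithinAt)
    (fun x hx => (hderiv x hx).deriv)
  have hlim : Tendsto L (𝓝[>] 0) (𝓝 (π / 2)) := by
    convert (tendsto_EE'_nhdsGT_zero.mul tendsto_EK_nhdsGT_zero).sub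
      tendsto_EK_sub_EE_mul_EK'_nhdsGT_zero using 1
    · ext x
      simp only [L]
      ring
    · simp
  have hconst : Tendsto L (𝓝[>] 0) (𝓝 c) := tendsto_const_nhds.congr' <| by
    filter_upwards [Ioo_mem_nhdsGT (zero_lt_one' ℝ)] with x hx using (hc x hx).symm
  exact (hc r hr).trans (tendsto_nhds_unique hconst hlim)

lemma hasDerivAt_EE'_sub_mul_EK' (hr0 : r ≠ 0) (hr : r ^ 2 < 1) :
    HasDerivAt (fun r => EE' r - r * EK' r) ((EE' r - EK' r) / (1 + r)) r := by
  refine ((hasDerivAt_EE' hr0 hr).sub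
    ((hasDerivAt_id r).mul (hasDerivAt_EK' hr0 hr))).congr_deriv ?_
  have h1r : 1 + r ≠ 0 := by nlinarith
  have : 1 - r ^ 2 ≠ 0 := (sub_pos.2 hr).ne'
  simp only [id]
  field_simp
  ring

lemma continuousOn_EE'_sub_mul_EK' : ContinuousOn (fun r => EE' r - r * EK' r) (Ioc 0 1) := by
  refine continuous_EE'.continuousOn.sub (continuousOn_id.mul fun r hr => ?_)
  have hsq : √(1 - r ^ 2) ^ 2 < 1 := by
    rw [sq_sqrt (by nlinarith [hr.1, hr.2])]
    nlinarith [hr.1]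
  exact (ContinuousAt.comp (f := fun r : ℝ => √(1 - r ^ 2)) (x := r) (continuousAt_EK hsq)
    (by fun_prop)).continuousWithinAt

lemma strictAntiOn_EE'_sub_mul_EK' : StrictAntiOn (fun r => EE' r - r * EK' r) (Ioc 0 1) := by
  refine strictAntiOn_of_deriv_neg (convex_Ioc 0 1) continuousOn_EE'_sub_mul_EK' fun r hr => ?_
  rw [interior_Ioc] at hr
  have hr2 : r ^ 2 < 1 := by nlinarith [hr.1, hr.2]
  rw [(hasDerivAt_EE'_sub_mul_EK' hr.1.ne' hr2).deriv]
  exact div_neg_of_neg_of_pos (sub_neg.2 (EE_lt_EK (sqrt_one_sub_sq_ne_zero hr2)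
    (sq_sqrt_one_sub_sq_lt_one hr.1.ne' hr2))) (by linarith [hr.1])

lemma EE'_sub_mul_EK'_pos (hr : r ∈ Ioo 0 1) : 0 < EE' r - r * EK' r := by
  have h := strictAntiOn_EE'_sub_mul_EK' ⟨hr.1, hr.2.le⟩ ⟨one_pos, le_rfl⟩ hr.2
  simpa [EE', EK', EE_zero, EK_zero] using h

lemma hasDerivAt_EE_sub_one_sub_mul_EK (hr0 : r ≠ 0) (hr : r ^ 2 < 1) :
    HasDerivAt (fun r => EE r - (1 - r) * EK r) (EE r / (1 + r)) r := by
  refine ((hasDerivAt_EE hr0 hr).sub (((hasDerivAt_id r).const_sub 1).mul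
    (hasDerivAt_EK hr0 hr))).congr_deriv ?_
  have h1r : 1 + r ≠ 0 := by nlinarith
  have : 1 - r ^ 2 ≠ 0 := (sub_pos.2 hr).ne'
  simp only [id]
  field_simp
  ring

end Complementary

theorem psi_hasDerivAt (r : ℝ) (hr : r ∈ Ioo (0:ℝ) 1) :
    HasDerivAt psi (π / (1 - r^2) * ((1 - r) / (EE' r - r * EK' r))^2) r := by
  have hr0 : r ≠ 0 := hr.1.ne'
  have hr2 : r ^ 2 < 1 := by nlinarith [hr.1, hr.2]
  have hD := EE'_sub_mul_EK'_pos hr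
  have hleg := legendre_relation hr
  refine (((hasDerivAt_EE_sub_one_sub_mul_EK hr0 hr2).const_mul 2).div
    (hasDerivAt_EE'_sub_mul_EK' hr0 hr2) hD.ne').congr_deriv ?_
  have h1r : 1 + r ≠ 0 := by linarith [hr.1]
  have : 1 - r ^ 2 ≠ 0 := (sub_pos.2 hr2).ne'
  field_simp
  linear_combination 2 * (1 - r) * (1 - r ^ 2) * hleg
end

section
/- For every r∈(0,1), letting t = (1−r)/(1+r), one has K(t²) = ((1+r)²/4) · K'(r²). -/
/-! The Gauss–Landen substitution `sin θ = (1 + k) sin φ / (1 + k sin² φ)` maps `[0, π/2]`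
onto itself, and since `(1 + k sin² φ)² - 4k sin² φ = (1 - k sin² φ)²` it turns the integrand
of `K` at modulus `2√k / (1 + k)` into `1 + k` times the integrand at modulus `k`; hence
`K(2√k / (1 + k)) = (1 + k) K(k)` for `0 ≤ k < 1`. With `t = (1 - r)/(1 + r)` and
`m = (1 - r²)/(1 + r²)`, applying this at `k = t²` (modulus `m`) and at `k = m`
(modulus `√(1 - r⁴)`) gives `K'(r²) = (1 + m)(1 + t²) K(t²) = 4 K(t²) / (1 + r)²`. -/

open Real Set Filter Topology

open intervalIntegral

lemma one_sub_mul_sin_sq_pos {c : ℝ} (hc : c < 1) (t : ℝ) : 0 < 1 - c * sin t ^ 2 := by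
  have := sin_sq_le_one t
  rcases le_or_gt c 0 with h | h <;> nlinarith [sq_nonneg (sin t)]

section Landen

variable {k : ℝ}

noncomputable def landenSin (k φ : ℝ) : ℝ := (1 + k) * sin φ / (1 + k * sin φ ^ 2)

noncomputable def landenAngle (k φ : ℝ) : ℝ := arcsin (landenSin k φ)

lemma one_add_mul_sin_sq_pos (hk : 0 ≤ k) (φ : ℝ) : 0 < 1 + k * sin φ ^ 2 := by positivity

lemma continuous_landenSin (hk : 0 ≤ k) : Continuous (landenSin k) :=
  Continuous.div (by fun_prop) (by fun_prop) fun φ ↦ (one_add_mul_sin_sq_pos hk φ).ne'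

lemma landenSin_mem_Icc (hk0 : 0 ≤ k) (hk1 : k ≤ 1) (φ : ℝ) :
    landenSin k φ ∈ Icc (-1) 1 := by
  have hs0 := neg_one_le_sin φ
  have hs1 := sin_le_one φ
  have hks0 : 0 ≤ 1 + k * sin φ := by nlinarith
  have hks1 : 0 ≤ 1 - k * sin φ := by nlinarith
  rw [landenSin, mem_Icc, le_div_iff₀ (one_add_mul_sin_sq_pos hk0 φ),
    div_le_iff₀ (one_add_mul_sin_sq_pos hk0 φ)]
  constructor <;> nlinarith [mul_nonneg (neg_le_iff_add_nonneg.mp hs0) hks0,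
    mul_nonneg (sub_nonneg.mpr hs1) hks1]

lemma one_sub_landenSin_sq (hk : 0 ≤ k) (φ : ℝ) :
    1 - landenSin k φ ^ 2 = cos φ ^ 2 * (1 - k ^ 2 * sin φ ^ 2) / (1 + k * sin φ ^ 2) ^ 2 := by
  have := one_add_mul_sin_sq_pos hk φ
  rw [landenSin, cos_sq']
  field_simp
  ring

lemma hasDerivAt_landenSin (hk : 0 ≤ k) (φ : ℝ) :
    HasDerivAt (landenSin k)
      ((1 + k) * cos φ * (1 - k * sin φ ^ 2) / (1 + k * sin φ ^ 2) ^ 2) φ := by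
  have hnum := (hasDerivAt_sin φ).const_mul (1 + k)
  have hden := (((hasDerivAt_sin φ).pow 2).const_mul k).const_add 1
  refine (hnum.div hden (one_add_mul_sin_sq_pos hk φ).ne').congr_deriv ?_
  simp only [Pi.pow_apply]
  field_simp
  ring

lemma hasDerivAt_landenAngle (hk0 : 0 ≤ k) (hk1 : k < 1) {φ : ℝ} (hφ : 0 < cos φ) :
    HasDerivAt (landenAngle k) ((1 + k) * (1 - k * sin φ ^ 2) /
      ((1 + k * sin φ ^ 2) * √(1 - k ^ 2 * sin φ ^ 2))) φ := by
  have hA := one_add_mul_sin_sq_pos hk0 φ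
  have hC := one_sub_mul_sin_sq_pos (c := k ^ 2) (by nlinarith) φ
  have hsqrt : √(1 - landenSin k φ ^ 2) =
      cos φ * √(1 - k ^ 2 * sin φ ^ 2) / (1 + k * sin φ ^ 2) := by
    rw [one_sub_landenSin_sq hk0, sqrt_div' _ (by positivity), sqrt_mul' _ hC.le,
      sqrt_sq hφ.le, sqrt_sq hA.le]
  have hpos : 0 < 1 - landenSin k φ ^ 2 := by
    rw [one_sub_landenSin_sq hk0]; positivity
  have hne1 : landenSin k φ ≠ 1 := by rintro h; simp [h] at hpos
  have hne2 : landenSin k φ ≠ -1 := by rintro h; simp [h] at hpos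
  refine ((hasDerivAt_arcsin hne2 hne1).comp φ (hasDerivAt_landenSin hk0 φ)).congr_deriv ?_
  rw [hsqrt]
  field_simp

lemma landenAngle_zero : landenAngle k 0 = 0 := by simp [landenAngle, landenSin]

lemma landenAngle_pi_div_two (hk : 0 ≤ k) : landenAngle k (π / 2) = π / 2 := by
  simp [landenAngle, landenSin, div_self (by positivity : 1 + k ≠ 0)]

lemma landen_integrand_eq (hk0 : 0 ≤ k) (hk1 : k < 1) {q : ℝ} (hq : q ^ 2 = 4 * k / (1 + k) ^ 2)
    (φ : ℝ) :
    1 / √(1 - q ^ 2 * sin (landenAngle k φ) ^ 2) * ((1 + k) * (1 - k * sin φ ^ 2) /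
      ((1 + k * sin φ ^ 2) * √(1 - k ^ 2 * sin φ ^ 2))) =
      (1 + k) * (1 / √(1 - k ^ 2 * sin φ ^ 2)) := by
  obtain ⟨hu0, hu1⟩ := landenSin_mem_Icc hk0 hk1.le φ
  have hA := one_add_mul_sin_sq_pos hk0 φ
  have hB := one_sub_mul_sin_sq_pos hk1 φ
  have hC := sqrt_pos.mpr (one_sub_mul_sin_sq_pos (c := k ^ 2) (by nlinarith) φ)
  have hsq : 1 - q ^ 2 * sin (landenAngle k φ) ^ 2 =
      ((1 - k * sin φ ^ 2) / (1 + k * sin φ ^ 2)) ^ 2 := by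
    rw [landenAngle, sin_arcsin hu0 hu1, hq, landenSin]
    field_simp
    ring
  rw [hsq, sqrt_sq (by positivity)]
  field_simp

theorem EK_landen (hk0 : 0 ≤ k) (hk1 : k < 1) {q : ℝ} (hq : q ^ 2 = 4 * k / (1 + k) ^ 2) :
    EK q = (1 + k) * EK k := by
  have hpi : (0 : ℝ) ≤ π / 2 := by positivity
  have hsubst := integral_comp_mul_deriv_of_deriv_nonneg (f := landenAngle k)
    (g := fun θ ↦ 1 / √(1 - q ^ 2 * sin θ ^ 2))
    (continuous_arcsin.comp_continuousOn (continuous_landenSin hk0).continuousOn)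
    (fun φ hφ ↦ by
      rw [min_eq_left hpi, max_eq_right hpi] at hφ
      exact hasDerivAt_landenAngle hk0 hk1 (cos_pos_of_mem_Ioo ⟨by linarith [hφ.1], hφ.2⟩))
    (fun φ _ ↦ div_nonneg (mul_nonneg (by linarith) (one_sub_mul_sin_sq_pos hk1 φ).le)
      (by positivity))
  rw [landenAngle_zero, landenAngle_pi_div_two hk0] at hsubst
  rw [EK, ← hsubst, EK, ← integral_const_mul]
  exact integral_congr fun φ _ ↦ landen_integrand_eq hk0 hk1 hq φ

end Landen

theorem landen_EK (r : ℝ) (hr : r ∈ Ioo (0:ℝ) 1) :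
    EK (((1 - r) / (1 + r))^2) = (1 + r)^2 / 4 * EK' (r^2) := by
  obtain ⟨hr0, hr1⟩ := hr
  have hr2 : 0 < 1 + r ^ 2 := by positivity
  have hr_sq : r ^ 2 < 1 := by nlinarith
  set t := (1 - r) / (1 + r) with ht
  set m := (1 - r ^ 2) / (1 + r ^ 2) with hm
  have ht1 : t ^ 2 < 1 := by
    rw [ht, div_pow, div_lt_one (by positivity)]
    nlinarith
  have hm0 : 0 ≤ m := div_nonneg (sub_nonneg.mpr hr_sq.le) hr2.le
  have hm1 : m < 1 := by
    rw [hm, div_lt_one hr2]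
    nlinarith
  have hK_m : EK m = (1 + t ^ 2) * EK (t ^ 2) :=
    EK_landen (sq_nonneg t) ht1 (by rw [hm, ht]; field_simp; ring)
  have hr4 : 0 ≤ 1 - (r ^ 2) ^ 2 := sub_nonneg.mpr (pow_le_one₀ (sq_nonneg _) hr_sq.le)
  have hK'_r : EK' (r ^ 2) = (1 + m) * EK m :=
    EK_landen hm0 hm1 (by rw [sq_sqrt hr4, hm]; field_simp; ring)
  rw [hK'_r, hK_m, hm, ht]
  field_simp
  ring
end

section
/- For every r∈(0,1), letting t = (1−r)/(1+r), one has K'(t²) = (1+r)² · K(r²). -/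
open Real Set Filter Topology

/-!
Gauss's invariance of the AGM integral. Put I(a, b) = ∫₀^{π/2} dθ / √(a² cos² θ + b² sin² θ),
so that K(k) = I(1, k') and K'(k) = I(1, k). The substitution t = b tan θ gives
I(a, b) = ∫₀^∞ dt / √((t² + a²)(t² + b²)), and the substitution t = u + √(u² + ab), a monotone
bijection ℝ → (0, ∞), turns this into half the integral over ℝ of the same kernel for the
arithmetic and geometric means; hence I(a, b) = I((a + b)/2, √(ab)). With t = (1 - r)/(1 + r),
homogeneity of I and two Gauss steps give
K'(t²) = I(1, t²) = (1+r)² I((1+r)², (1-r)²) = (1+r)² I(1+r², 1-r²) = (1+r)² I(1, √(1-r⁴)) = (1+r)² K(r²).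
-/

open MeasureTheory

noncomputable def agmIntegral (a b : ℝ) : ℝ :=
  ∫ θ in (0:ℝ)..(π/2), 1 / √(a ^ 2 * cos θ ^ 2 + b ^ 2 * sin θ ^ 2)

noncomputable def agmKernel (a b t : ℝ) : ℝ := 1 / √((t ^ 2 + a ^ 2) * (t ^ 2 + b ^ 2))

lemma agmIntegral_mul {l : ℝ} (hl : 0 < l) (a b : ℝ) :
    agmIntegral (l * a) (l * b) = l⁻¹ * agmIntegral a b := by
  rw [agmIntegral, agmIntegral, ← intervalIntegral.integral_const_mul]
  refine intervalIntegral.integral_congr fun θ _ => ?_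
  have h : (l * a) ^ 2 * cos θ ^ 2 + (l * b) ^ 2 * sin θ ^ 2
      = l ^ 2 * (a ^ 2 * cos θ ^ 2 + b ^ 2 * sin θ ^ 2) := by ring
  simp only [h, Real.sqrt_mul (sq_nonneg l), Real.sqrt_sq hl.le, one_div, mul_inv]

lemma EK_eq_agmIntegral {s : ℝ} (hs : s ^ 2 ≤ 1) : EK s = agmIntegral 1 √(1 - s ^ 2) := by
  refine intervalIntegral.integral_congr fun θ _ => ?_
  have h : (1:ℝ) ^ 2 * cos θ ^ 2 + √(1 - s ^ 2) ^ 2 * sin θ ^ 2 = 1 - s ^ 2 * sin θ ^ 2 := by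
    rw [Real.sq_sqrt (by linarith)]
    linear_combination sin_sq_add_cos_sq θ
  simp only [h]

lemma agmKernel_mul_tan {a b θ : ℝ} (ha : 0 < a) (hb : 0 < b) (hθ : 0 < cos θ) :
    b / cos θ ^ 2 * agmKernel a b (b * tan θ)
      = 1 / √(a ^ 2 * cos θ ^ 2 + b ^ 2 * sin θ ^ 2) := by
  have h : ((b * tan θ) ^ 2 + a ^ 2) * ((b * tan θ) ^ 2 + b ^ 2)
      = (b / cos θ ^ 2) ^ 2 * (a ^ 2 * cos θ ^ 2 + b ^ 2 * sin θ ^ 2) := by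
    rw [tan_eq_sin_div_cos]
    field_simp
    linear_combination (b ^ 2 * sin θ ^ 2 + a ^ 2 * cos θ ^ 2) * sin_sq_add_cos_sq θ
  rw [agmKernel, h, Real.sqrt_mul (sq_nonneg _), Real.sqrt_sq (by positivity)]
  field_simp

lemma image_mul_tan_Ioo {b : ℝ} (hb : 0 < b) :
    (fun θ => b * tan θ) '' Ioo 0 (π / 2) = Ioi 0 := by
  ext t
  constructor
  · rintro ⟨θ, ⟨hθ0, hθ⟩, rfl⟩
    exact mul_pos hb (tan_pos_of_pos_of_lt_pi_div_two hθ0 hθ)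
  · intro ht
    refine ⟨arctan (t / b), ⟨arctan_pos.mpr (div_pos ht hb), arctan_lt_pi_div_two _⟩, ?_⟩
    simp only [tan_arctan, mul_div_cancel₀ t hb.ne']

lemma agmIntegral_eq_integral_agmKernel {a b : ℝ} (ha : 0 < a) (hb : 0 < b) :
    agmIntegral a b = ∫ t in Ioi 0, agmKernel a b t := by
  have hsub : Ioo 0 (π / 2) ⊆ Ioo (-(π / 2)) (π / 2) := Ioo_subset_Ioo_left (by linarith [pi_pos])
  have hcos : ∀ θ ∈ Ioo 0 (π / 2), 0 < cos θ := fun θ hθ => cos_pos_of_mem_Ioo (hsub hθ)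
  have hderiv : ∀ θ ∈ Ioo 0 (π / 2),
      HasDerivWithinAt (fun θ => b * tan θ) (b / cos θ ^ 2) (Ioo 0 (π / 2)) θ := by
    intro θ hθ
    simpa [div_eq_mul_one_div b] using
      ((hasDerivAt_tan (hcos θ hθ).ne').const_mul b).hasDerivWithinAt
  have hmono : MonotoneOn (fun θ => b * tan θ) (Ioo 0 (π / 2)) := fun x hx y hy hxy =>
    mul_le_mul_of_nonneg_left (strictMonoOn_tan.monotoneOn (hsub hx) (hsub hy) hxy) hb.le
  rw [← image_mul_tan_Ioo hb, integral_image_eq_integral_deriv_smul_of_monotoneOn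
    measurableSet_Ioo hderiv hmono, agmIntegral, intervalIntegral.integral_of_le (by positivity),
    integral_Ioc_eq_integral_Ioo]
  refine setIntegral_congr_fun measurableSet_Ioo fun θ hθ => ?_
  rw [smul_eq_mul, agmKernel_mul_tan ha hb (hcos θ hθ)]

lemma add_sqrt_sq_add_pos {c : ℝ} (hc : 0 < c) (u : ℝ) : 0 < u + √(u ^ 2 + c) := by
  have : |u| < √(u ^ 2 + c) := by
    rw [← Real.sqrt_sq_eq_abs]
    exact Real.sqrt_lt_sqrt (sq_nonneg u) (by linarith)
  linarith [neg_abs_le u]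

lemma hasDerivAt_add_sqrt_sq_add {c : ℝ} (hc : 0 < c) (u : ℝ) :
    HasDerivAt (fun u => u + √(u ^ 2 + c)) (1 + u / √(u ^ 2 + c)) u := by
  have h : HasDerivAt (fun u => u ^ 2 + c) (2 * u) u := by
    simpa using (hasDerivAt_pow 2 u).add_const c
  refine ((hasDerivAt_id' u).add (h.sqrt (by positivity))).congr_deriv ?_
  ring

lemma strictMono_add_sqrt_sq_add {c : ℝ} (hc : 0 < c) : StrictMono fun u => u + √(u ^ 2 + c) :=
  strictMono_of_hasDerivAt_pos (hasDerivAt_add_sqrt_sq_add hc) fun u => by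
    have hs : 0 < √(u ^ 2 + c) := Real.sqrt_pos.mpr (by positivity)
    rw [one_add_div hs.ne']
    exact div_pos (add_comm u _ ▸ add_sqrt_sq_add_pos hc u) hs

lemma range_add_sqrt_sq_add {c : ℝ} (hc : 0 < c) : range (fun u => u + √(u ^ 2 + c)) = Ioi 0 := by
  refine (range_subset_iff.mpr (add_sqrt_sq_add_pos hc)).antisymm fun t (ht : 0 < t) => ?_
  refine ⟨(t - c / t) / 2, ?_⟩
  have h : ((t - c / t) / 2) ^ 2 + c = ((t + c / t) / 2) ^ 2 := by
    field_simp
    ring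
  simp only [h, Real.sqrt_sq (by positivity : 0 ≤ (t + c / t) / 2)]
  ring

lemma agmKernel_abs (a b u : ℝ) : agmKernel a b |u| = agmKernel a b u := by
  simp only [agmKernel, sq_abs]

lemma agmKernel_mean_subst {a b : ℝ} (ha : 0 < a) (hb : 0 < b) (u : ℝ) :
    (1 + u / √(u ^ 2 + a * b)) * agmKernel a b (u + √(u ^ 2 + a * b))
      = agmKernel ((a + b) / 2) √(a * b) u / 2 := by
  have hab : 0 < a * b := by positivity
  set s := √(u ^ 2 + a * b)
  have hs0 : 0 < s := Real.sqrt_pos.mpr (by positivity)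
  have hs2 : s ^ 2 = u ^ 2 + a * b := Real.sq_sqrt (by positivity)
  have ht : 0 < u + s := add_sqrt_sq_add_pos hab u
  have key : ((u + s) ^ 2 + a ^ 2) * ((u + s) ^ 2 + b ^ 2)
      = (2 * (u + s)) ^ 2 * (u ^ 2 + ((a + b) / 2) ^ 2) := by
    linear_combination (s ^ 2 + 4 * u * s + 3 * u ^ 2 - a * b) * hs2
  rw [agmKernel, agmKernel, key, Real.sq_sqrt hab.le, ← hs2, Real.sqrt_mul (sq_nonneg _),
    Real.sqrt_mul (by positivity), Real.sqrt_sq (by positivity), Real.sqrt_sq hs0.le]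
  field_simp
  ring

lemma integral_agmKernel_mean {a b : ℝ} (ha : 0 < a) (hb : 0 < b) :
    ∫ t in Ioi 0, agmKernel a b t = ∫ t in Ioi 0, agmKernel ((a + b) / 2) √(a * b) t := by
  have hab : 0 < a * b := by positivity
  conv_lhs => rw [← range_add_sqrt_sq_add hab, ← image_univ]
  rw [integral_image_eq_integral_deriv_smul_of_monotoneOn MeasurableSet.univ
      (fun u _ => (hasDerivAt_add_sqrt_sq_add hab u).hasDerivWithinAt)
      ((strictMono_add_sqrt_sq_add hab).monotone.monotoneOn _), setIntegral_univ]
  have h := integral_comp_abs (f := agmKernel ((a + b) / 2) √(a * b))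
  simp only [agmKernel_abs] at h
  simp only [smul_eq_mul, agmKernel_mean_subst ha hb, integral_div, h]
  ring

lemma agmIntegral_mean {a b : ℝ} (ha : 0 < a) (hb : 0 < b) :
    agmIntegral a b = agmIntegral ((a + b) / 2) √(a * b) := by
  rw [agmIntegral_eq_integral_agmKernel ha hb, integral_agmKernel_mean ha hb,
    agmIntegral_eq_integral_agmKernel (by positivity) (Real.sqrt_pos.mpr (by positivity))]

lemma EK'_eq_agmIntegral {k : ℝ} (hk0 : 0 ≤ k) (hk1 : k ≤ 1) : EK' k = agmIntegral 1 k := by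
  have hk2 : 0 ≤ 1 - k ^ 2 := by nlinarith
  rw [EK', EK_eq_agmIntegral (by rw [Real.sq_sqrt hk2]; nlinarith), Real.sq_sqrt hk2,
    sub_sub_cancel, Real.sqrt_sq hk0]

theorem landen_EK' (r : ℝ) (hr : r ∈ Ioo (0:ℝ) 1) :
    EK' (((1 - r) / (1 + r))^2) = (1 + r)^2 * EK (r^2) := by
  obtain ⟨hr0, hr1⟩ := hr
  have hr2 : r ^ 2 < 1 := by nlinarith
  have ht : (1 - r) / (1 + r) ≤ 1 := (div_le_one (by positivity)).mpr (by linarith)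
  have hscale : agmIntegral ((1 + r) ^ 2) ((1 - r) ^ 2)
      = ((1 + r) ^ 2)⁻¹ * agmIntegral 1 (((1 - r) / (1 + r)) ^ 2) := by
    rw [← agmIntegral_mul (by positivity)]
    congr 1 <;> field_simp
  calc EK' (((1 - r) / (1 + r)) ^ 2) = agmIntegral 1 (((1 - r) / (1 + r)) ^ 2) :=
        EK'_eq_agmIntegral (by positivity) (pow_le_one₀ (by bound) ht)
    _ = (1 + r) ^ 2 * agmIntegral ((1 + r) ^ 2) ((1 - r) ^ 2) := by
      rw [hscale]
      field_simp
    _ = (1 + r) ^ 2 * agmIntegral (1 + r ^ 2) (1 - r ^ 2) := by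
      rw [agmIntegral_mean (by positivity) (by nlinarith), ← mul_pow,
        Real.sqrt_sq (by nlinarith)]
      ring_nf
    _ = (1 + r) ^ 2 * agmIntegral 1 √(1 - (r ^ 2) ^ 2) := by
      rw [agmIntegral_mean (by positivity) (by linarith)]
      ring_nf
    _ = (1 + r) ^ 2 * EK (r ^ 2) := by
      rw [EK_eq_agmIntegral (pow_le_one₀ (sq_nonneg r) hr2.le)]
end

section
/- The function f₈(r) = (E(r) − (1−r)K(r)) / (√r · (1−r) · K(r)) is strictly increasing on (0,1), with f₈(r)→0 as r→0+ and f₈(r)→∞ as r→1−. -/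
/-!
With `B(r) = ∫₀^{π/2} cos² t / √(1 - r² sin² t) dt` one has `E = (1 - r²) K + r² B`, hence
`f₈(r) = √r (1 + g(r))` with `g(r) = r B / ((1 - r) K)`. The numerator of `g'` is
`K B + r (1 - r) (K B' - B K')`; writing each product of two integrals as a double integral and
symmetrizing in the two variables, the integrand becomes pointwise nonnegative, so `g` is
nondecreasing and `f₈` is strictly increasing. Near `0`, `0 ≤ g(r) ≤ r / (1 - r)`; near `1`,
`B ≥ π / 4` and `(1 - r) K ≤ (π / 2) √(1 - r)` give `g(r) ≥ r / (2 √(1 - r)) → ∞`.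
-/

open Real Set Filter Topology

open MeasureTheory

namespace EllipticIntegral

theorem sq_mul_sub_sq_le {r x y : ℝ} (hr0 : 0 ≤ r) (hr1 : r ≤ 1) (hx0 : 0 ≤ x) (hx1 : x ≤ 1)
    (hy0 : 0 ≤ y) (hy1 : y ≤ 1) :
    r ^ 2 * (1 - r) * (x - y) ^ 2 ≤ (2 - x - y) * ((1 - r ^ 2 * x) * (1 - r ^ 2 * y)) := by
  wlog hyx : y ≤ x generalizing x y
  · linarith [this hy0 hy1 hx0 hx1 (le_of_not_ge hyx)]
  have hr2 : r ^ 2 ≤ r := by nlinarith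
  have hb : 1 - r ≤ 1 - r ^ 2 * x := by nlinarith
  have ha : r ^ 2 * (x - y) ≤ 1 - r ^ 2 * y := by nlinarith
  have hprod : (1 - r) * (r ^ 2 * (x - y)) ≤ (1 - r ^ 2 * x) * (1 - r ^ 2 * y) :=
    mul_le_mul hb ha (by nlinarith) (by linarith)
  have hprod0 : 0 ≤ (1 - r ^ 2 * x) * (1 - r ^ 2 * y) := mul_nonneg (by linarith) (by nlinarith)
  calc r ^ 2 * (1 - r) * (x - y) ^ 2 = (1 - r) * (r ^ 2 * (x - y)) * (x - y) := by ring
    _ ≤ (1 - r ^ 2 * x) * (1 - r ^ 2 * y) * (2 - x - y) :=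
        mul_le_mul hprod (by linarith) (by linarith) hprod0
    _ = _ := by ring

theorem add_add_mul_sub_mul_div_sub_div_nonneg {r x y : ℝ} (hr0 : 0 ≤ r) (hr1 : r < 1)
    (hx0 : 0 ≤ x) (hx1 : x ≤ 1) (hy0 : 0 ≤ y) (hy1 : y ≤ 1) :
    0 ≤ (1 - x) + (1 - y) + r * (1 - r) *
      ((1 - x - (1 - y)) * (r * x / (1 - r ^ 2 * x) - r * y / (1 - r ^ 2 * y))) := by
  have hx : 0 < 1 - r ^ 2 * x := by nlinarith
  have hy : 0 < 1 - r ^ 2 * y := by nlinarith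
  have key := sq_mul_sub_sq_le hr0 hr1.le hx0 hx1 hy0 hy1
  have hd : r * x / (1 - r ^ 2 * x) - r * y / (1 - r ^ 2 * y) =
      r * (x - y) / ((1 - r ^ 2 * x) * (1 - r ^ 2 * y)) := by
    rw [div_sub_div _ _ hx.ne' hy.ne']
    ring
  have hle : r ^ 2 * (1 - r) * (x - y) ^ 2 / ((1 - r ^ 2 * x) * (1 - r ^ 2 * y)) ≤ 2 - x - y :=
    (div_le_iff₀ (mul_pos hx hy)).2 key
  rw [hd]
  linarith [show r * (1 - r) * ((1 - x - (1 - y)) *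
      (r * (x - y) / ((1 - r ^ 2 * x) * (1 - r ^ 2 * y)))) =
    -(r ^ 2 * (1 - r) * (x - y) ^ 2 / ((1 - r ^ 2 * x) * (1 - r ^ 2 * y))) by ring]

section Symmetrization

variable {α : Type*} [MeasurableSpace α] {μ : Measure α} [SFinite μ]

theorem integral_prod_nonneg_of_add_swap_nonneg {F : α × α → ℝ} (hF : Integrable F (μ.prod μ))
    (h : ∀ z, 0 ≤ F z + F z.swap) : 0 ≤ ∫ z, F z ∂μ.prod μ := by
  have hsum : 0 ≤ ∫ z, F z + F z.swap ∂μ.prod μ := integral_nonneg h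
  rw [integral_add hF (hF.swap : Integrable (fun z ↦ F z.swap) _), integral_prod_swap] at hsum
  linarith

theorem integral_mul_integral_add_mul_cov_nonneg (κ : ℝ) {w c d : α → ℝ}
    (hw : Integrable w μ) (hcw : Integrable (fun x ↦ c x * w x) μ)
    (hdw : Integrable (fun x ↦ d x * w x) μ) (hcdw : Integrable (fun x ↦ c x * d x * w x) μ)
    (hw0 : ∀ x, 0 ≤ w x) (h : ∀ x y, 0 ≤ c x + c y + κ * ((c x - c y) * (d x - d y))) :
    0 ≤ (∫ x, w x ∂μ) * (∫ x, c x * w x ∂μ) + κ * ((∫ x, w x ∂μ) * (∫ x, c x * d x * w x ∂μ)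
      - (∫ x, c x * w x ∂μ) * ∫ x, d x * w x ∂μ) := by
  have h₁ := hw.mul_prod hcw
  have h₂ := hw.mul_prod hcdw
  have h₃ := hcw.mul_prod hdw
  rw [← integral_prod_mul, ← integral_prod_mul, ← integral_prod_mul,
    ← integral_sub h₂ h₃, ← integral_const_mul,
    ← integral_add h₁ (by exact (h₂.sub h₃).const_mul κ)]
  refine integral_prod_nonneg_of_add_swap_nonneg (h₁.add ((h₂.sub h₃).const_mul κ)) fun z ↦ ?_
  have := mul_nonneg (mul_nonneg (hw0 z.1) (hw0 z.2)) (h z.1 z.2)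
  simp only [Prod.fst_swap, Prod.snd_swap]
  linarith

end Symmetrization

noncomputable def delta (r t : ℝ) : ℝ := 1 - r ^ 2 * sin t ^ 2

noncomputable def weightedIntegral (r : ℝ) (φ : ℝ → ℝ) : ℝ :=
  ∫ t in (0:ℝ)..π / 2, φ t / √(delta r t)

/-- The associated complete elliptic integral `B` of the literature. -/
noncomputable def EB (r : ℝ) : ℝ := weightedIntegral r fun t ↦ cos t ^ 2

section Weighted

variable {r : ℝ} {φ ψ : ℝ → ℝ}

theorem one_sub_sq_le_delta (r t : ℝ) : 1 - r ^ 2 ≤ delta r t := by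
  unfold delta
  nlinarith [sin_sq_le_one t, sq_nonneg r]

theorem delta_le_one (r t : ℝ) : delta r t ≤ 1 := by
  unfold delta
  nlinarith [sq_nonneg r, sq_nonneg (sin t)]

theorem delta_pos (hr : r ^ 2 < 1) (t : ℝ) : 0 < delta r t :=
  (sub_pos.2 hr).trans_le (one_sub_sq_le_delta r t)

theorem continuous_div_sqrt_delta (hr : r ^ 2 < 1) (hφ : Continuous φ) :
    Continuous fun t ↦ φ t / √(delta r t) :=
  hφ.div (by unfold delta; fun_prop) fun t ↦ (sqrt_pos.2 (delta_pos hr t)).ne'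

theorem intervalIntegrable_div_sqrt_delta (hr : r ^ 2 < 1) (hφ : Continuous φ) (a b : ℝ) :
    IntervalIntegrable (fun t ↦ φ t / √(delta r t)) volume a b :=
  (continuous_div_sqrt_delta hr hφ).intervalIntegrable a b

theorem EK_eq_weightedIntegral (r : ℝ) : EK r = weightedIntegral r fun _ ↦ 1 := rfl

theorem weightedIntegral_mono (hr : r ^ 2 < 1) (hφ : Continuous φ) (hψ : Continuous ψ)
    (h : ∀ t, φ t ≤ ψ t) : weightedIntegral r φ ≤ weightedIntegral r ψ :=
  intervalIntegral.integral_mono_on (by positivity) (intervalIntegrable_div_sqrt_delta hr hφ _ _)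
    (intervalIntegrable_div_sqrt_delta hr hψ _ _) fun t _ ↦
      div_le_div_of_nonneg_right (h t) (sqrt_nonneg _)

theorem integral_le_weightedIntegral (hr : r ^ 2 < 1) (hφ : Continuous φ) (hφ0 : ∀ t, 0 ≤ φ t) :
    ∫ t in (0:ℝ)..π / 2, φ t ≤ weightedIntegral r φ :=
  intervalIntegral.integral_mono_on (by positivity) (hφ.intervalIntegrable _ _)
    (intervalIntegrable_div_sqrt_delta hr hφ _ _) fun t _ ↦
      (le_div_iff₀ (sqrt_pos.2 (delta_pos hr t))).2
        (mul_le_of_le_one_right (hφ0 t) (sqrt_le_one.2 (delta_le_one r t)))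

theorem weightedIntegral_le (hr : r ^ 2 < 1) (hφ : Continuous φ) (hφ0 : ∀ t, 0 ≤ φ t) :
    weightedIntegral r φ ≤ (∫ t in (0:ℝ)..π / 2, φ t) / √(1 - r ^ 2) := by
  rw [← intervalIntegral.integral_div]
  exact intervalIntegral.integral_mono_on (by positivity)
    (intervalIntegrable_div_sqrt_delta hr hφ _ _) ((hφ.div_const _).intervalIntegrable _ _)
    fun t _ ↦ div_le_div_of_nonneg_left (hφ0 t) (sqrt_pos.2 (sub_pos.2 hr))
      (sqrt_le_sqrt (one_sub_sq_le_delta r t))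

theorem EE_eq (hr : r ^ 2 < 1) : EE r = (1 - r ^ 2) * EK r + r ^ 2 * EB r := by
  have hK := (intervalIntegrable_div_sqrt_delta (φ := fun _ ↦ 1) hr continuous_const
    0 (π / 2)).const_mul (1 - r ^ 2)
  have hB := (intervalIntegrable_div_sqrt_delta (φ := fun t ↦ cos t ^ 2) hr (by fun_prop)
    0 (π / 2)).const_mul (r ^ 2)
  rw [EK_eq_weightedIntegral, EB, weightedIntegral, weightedIntegral,
    ← intervalIntegral.integral_const_mul, ← intervalIntegral.integral_const_mul,
    ← intervalIntegral.integral_add hK hB]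
  refine intervalIntegral.integral_congr fun t _ ↦ ?_
  have hδ := delta_pos hr t
  change √(delta r t) = _
  field_simp
  rw [sq_sqrt hδ.le, delta, cos_sq']
  ring

theorem pi_div_two_le_EK (hr : r ^ 2 < 1) : π / 2 ≤ EK r := by
  rw [EK_eq_weightedIntegral]
  simpa using integral_le_weightedIntegral hr continuous_const fun _ ↦ zero_le_one

theorem EK_pos (hr : r ^ 2 < 1) : 0 < EK r := by
  linarith [pi_div_two_le_EK hr, pi_pos]

theorem EK_le (hr : r ^ 2 < 1) : EK r ≤ π / 2 / √(1 - r ^ 2) := by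
  rw [EK_eq_weightedIntegral]
  simpa using weightedIntegral_le hr continuous_const fun _ ↦ zero_le_one

theorem pi_div_four_le_EB (hr : r ^ 2 < 1) : π / 4 ≤ EB r := by
  have h := integral_le_weightedIntegral (φ := fun t ↦ cos t ^ 2) hr (by fun_prop)
    fun t ↦ sq_nonneg (cos t)
  rw [integral_cos_sq, cos_pi_div_two, cos_zero, sin_zero] at h
  rw [EB]
  convert h using 1
  ring

theorem EB_le_EK (hr : r ^ 2 < 1) : EB r ≤ EK r :=
  weightedIntegral_mono hr (by fun_prop) continuous_const fun t ↦ cos_sq_le_one t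

theorem hasDerivAt_div_sqrt_delta (c t : ℝ) {ρ : ℝ} (hρ : 0 < delta ρ t) :
    HasDerivAt (fun ρ ↦ c / √(delta ρ t)) (c * (ρ * sin t ^ 2 / delta ρ t) / √(delta ρ t)) ρ := by
  have hδ : HasDerivAt (fun ρ ↦ delta ρ t) (-(2 * ρ * sin t ^ 2)) ρ := by
    simpa [delta] using ((hasDerivAt_pow 2 ρ).mul_const (sin t ^ 2)).const_sub 1
  refine ((hasDerivAt_const ρ c).fun_div (hδ.sqrt hρ.ne') (sqrt_pos.2 hρ).ne').congr_deriv ?_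
  rw [sq_sqrt hρ.le]
  field_simp
  ring

theorem hasDerivAt_weightedIntegral (hφ : Continuous φ) (hφ1 : ∀ t, |φ t| ≤ 1) (hr : r ^ 2 < 1) :
    HasDerivAt (fun ρ ↦ weightedIntegral ρ φ)
      (weightedIntegral r fun t ↦ φ t * (r * sin t ^ 2 / delta r t)) r := by
  obtain ⟨b, hrb, hb1⟩ := exists_between hr
  have hb0 : 0 < 1 - b := sub_pos.2 hb1
  have hs : {ρ : ℝ | ρ ^ 2 < b} ∈ 𝓝 r :=
    (isOpen_lt (continuous_pow 2) continuous_const).mem_nhds hrb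
  have hs1 : ∀ ρ ∈ {ρ : ℝ | ρ ^ 2 < b}, ρ ^ 2 < 1 := fun ρ hρ ↦ lt_trans hρ hb1
  have hφd : Continuous fun t ↦ φ t * (r * sin t ^ 2 / delta r t) :=
    hφ.mul <| (by fun_prop : Continuous fun t ↦ r * sin t ^ 2).div (by unfold delta; fun_prop)
      fun t ↦ (delta_pos hr t).ne'
  refine (intervalIntegral.hasDerivAt_integral_of_dominated_loc_of_deriv_le
    (F := fun ρ t ↦ φ t / √(delta ρ t))
    (F' := fun ρ t ↦ φ t * (ρ * sin t ^ 2 / delta ρ t) / √(delta ρ t))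
    (bound := fun _ ↦ 1 / (1 - b) / √(1 - b)) hs ?_ (intervalIntegrable_div_sqrt_delta hr hφ _ _)
    (continuous_div_sqrt_delta hr hφd).aestronglyMeasurable ?_ intervalIntegrable_const ?_).2
  · filter_upwards [hs] with ρ hρ
    exact (continuous_div_sqrt_delta (hs1 ρ hρ) hφ).aestronglyMeasurable
  · refine ae_of_all _ fun t _ ρ hρ ↦ ?_
    have hδ : 1 - b ≤ delta ρ t := by
      have : ρ ^ 2 < b := hρ
      linarith [one_sub_sq_le_delta ρ t]
    have hδ0 : 0 < delta ρ t := hb0.trans_le hδ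
    have hρs : |ρ * sin t ^ 2| ≤ 1 := by
      rw [abs_mul, abs_of_nonneg (sq_nonneg (sin t))]
      exact mul_le_one₀ ((sq_lt_one_iff_abs_lt_one ρ).1 (hs1 ρ hρ)).le (sq_nonneg _)
        (sin_sq_le_one t)
    rw [norm_div, norm_mul, norm_div, Real.norm_eq_abs, Real.norm_eq_abs, Real.norm_eq_abs,
      Real.norm_eq_abs, abs_of_pos hδ0, abs_of_pos (sqrt_pos.2 hδ0)]
    calc |φ t| * (|ρ * sin t ^ 2| / delta ρ t) / √(delta ρ t)
        ≤ 1 * (1 / (1 - b)) / √(1 - b) := by gcongr; exact hφ1 t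
      _ = 1 / (1 - b) / √(1 - b) := by rw [one_mul]
  · exact ae_of_all _ fun t _ ρ hρ ↦
      hasDerivAt_div_sqrt_delta (φ t) t (delta_pos (hs1 ρ hρ) t)

theorem hasDerivAt_EK (hr : r ^ 2 < 1) :
    HasDerivAt EK (weightedIntegral r fun t ↦ r * sin t ^ 2 / delta r t) r := by
  have h := hasDerivAt_weightedIntegral continuous_const (fun _ ↦ abs_one.le) hr
  simp only [one_mul] at h
  exact h

theorem hasDerivAt_EB (hr : r ^ 2 < 1) :
    HasDerivAt EB (weightedIntegral r fun t ↦ cos t ^ 2 * (r * sin t ^ 2 / delta r t)) r :=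
  hasDerivAt_weightedIntegral (by fun_prop)
    (fun t ↦ by rw [abs_of_nonneg (sq_nonneg _)]; exact cos_sq_le_one t) hr

theorem weightedIntegral_eq_integral_Ioc (r : ℝ) (φ : ℝ → ℝ) :
    weightedIntegral r φ = ∫ t in Ioc 0 (π / 2), φ t * (√(delta r t))⁻¹ := by
  rw [weightedIntegral, intervalIntegral.integral_of_le (by positivity)]
  simp only [div_eq_mul_inv]

theorem integrableOn_mul_inv_sqrt_delta (hr : r ^ 2 < 1) (hφ : Continuous φ) (a b : ℝ) :
    IntegrableOn (fun t ↦ φ t * (√(delta r t))⁻¹) (Ioc a b) := by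
  simpa only [div_eq_mul_inv] using (continuous_div_sqrt_delta hr hφ).integrableOn_Ioc

theorem EK_mul_EB_add_nonneg (hr0 : 0 ≤ r) (hr1 : r < 1) :
    0 ≤ EK r * EB r + r * (1 - r) *
      (EK r * weightedIntegral r (fun t ↦ cos t ^ 2 * (r * sin t ^ 2 / delta r t))
        - EB r * weightedIntegral r fun t ↦ r * sin t ^ 2 / delta r t) := by
  have hr : r ^ 2 < 1 := by nlinarith
  have hd : Continuous fun t ↦ r * sin t ^ 2 / delta r t :=
    (by fun_prop : Continuous fun t ↦ r * sin t ^ 2).div (by unfold delta; fun_prop)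
      fun t ↦ (delta_pos hr t).ne'
  have hw := integrableOn_mul_inv_sqrt_delta (φ := fun _ ↦ 1) hr continuous_const 0 (π / 2)
  simp only [one_mul] at hw
  rw [EK_eq_weightedIntegral, EB, weightedIntegral_eq_integral_Ioc,
    weightedIntegral_eq_integral_Ioc, weightedIntegral_eq_integral_Ioc,
    weightedIntegral_eq_integral_Ioc]
  simp only [one_mul]
  refine integral_mul_integral_add_mul_cov_nonneg (r * (1 - r)) hw
    (integrableOn_mul_inv_sqrt_delta hr (by fun_prop) _ _)
    (integrableOn_mul_inv_sqrt_delta hr hd _ _)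
    (integrableOn_mul_inv_sqrt_delta hr ((continuous_cos.pow 2).mul hd) _ _)
    (fun t ↦ inv_nonneg.2 (sqrt_nonneg _)) fun t u ↦ ?_
  rw [cos_sq', cos_sq']
  exact add_add_mul_sub_mul_div_sub_div_nonneg hr0 hr1 (sq_nonneg _) (sin_sq_le_one t)
    (sq_nonneg _) (sin_sq_le_one u)

theorem one_sub_mul_EK_le (hr0 : 0 ≤ r) (hr1 : r < 1) : (1 - r) * EK r ≤ π / 2 * √(1 - r) := by
  have hr : r ^ 2 < 1 := by nlinarith
  have h1r : 0 < 1 - r := sub_pos.2 hr1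
  calc (1 - r) * EK r ≤ (1 - r) * (π / 2 / √(1 - r ^ 2)) := by gcongr; exact EK_le hr
    _ ≤ (1 - r) * (π / 2 / √(1 - r)) := by
        gcongr
        nlinarith
    _ = π / 2 * √(1 - r) := by rw [mul_div_left_comm, div_sqrt]

end Weighted

noncomputable def bkRatio (r : ℝ) : ℝ := r * EB r / ((1 - r) * EK r)

noncomputable def f8 (r : ℝ) : ℝ := (EE r - (1 - r) * EK r) / (√r * (1 - r) * EK r)

section Ratio

variable {r : ℝ}

theorem hasDerivAt_bkRatio (hr : r ^ 2 < 1) :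
    HasDerivAt bkRatio ((EK r * EB r + r * (1 - r) *
      (EK r * weightedIntegral r (fun t ↦ cos t ^ 2 * (r * sin t ^ 2 / delta r t))
        - EB r * weightedIntegral r fun t ↦ r * sin t ^ 2 / delta r t)) /
      ((1 - r) * EK r) ^ 2) r := by
  have h1r : 1 - r ≠ 0 := by intro h; nlinarith
  refine (((hasDerivAt_id' r).fun_mul (hasDerivAt_EB hr)).fun_div
    (((hasDerivAt_id' r).const_sub 1).fun_mul (hasDerivAt_EK hr))
    (mul_ne_zero h1r (EK_pos hr).ne')).congr_deriv ?_
  ring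

theorem bkRatio_monotoneOn : MonotoneOn bkRatio (Ico 0 1) := by
  have hsq : ∀ r ∈ Ico (0 : ℝ) 1, r ^ 2 < 1 := fun r hr ↦ by nlinarith [hr.1, hr.2]
  refine monotoneOn_of_hasDerivWithinAt_nonneg (convex_Ico 0 1)
    (fun r hr ↦ (hasDerivAt_bkRatio (hsq r hr)).continuousAt.continuousWithinAt)
    (fun r hr ↦ (hasDerivAt_bkRatio (hsq r (interior_subset hr))).hasDerivWithinAt)
    fun r hr ↦ ?_
  rw [interior_Ico] at hr
  exact div_nonneg (EK_mul_EB_add_nonneg hr.1.le hr.2) (sq_nonneg _)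

theorem bkRatio_nonneg (hr0 : 0 ≤ r) (hr1 : r < 1) : 0 ≤ bkRatio r := by
  have hr : r ^ 2 < 1 := by nlinarith
  exact div_nonneg (mul_nonneg hr0 (by linarith [pi_div_four_le_EB hr, pi_pos]))
    (mul_nonneg (sub_nonneg.2 hr1.le) (EK_pos hr).le)

theorem bkRatio_le (hr0 : 0 ≤ r) (hr1 : r < 1) : bkRatio r ≤ r / (1 - r) := by
  have hr : r ^ 2 < 1 := by nlinarith
  rw [bkRatio, div_le_div_iff₀ (mul_pos (sub_pos.2 hr1) (EK_pos hr)) (sub_pos.2 hr1)]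
  nlinarith [mul_le_mul_of_nonneg_left (EB_le_EK hr) (mul_nonneg hr0 (sub_nonneg.2 hr1.le))]

theorem le_bkRatio (hr0 : 0 ≤ r) (hr1 : r < 1) : r / (2 * √(1 - r)) ≤ bkRatio r := by
  have hr : r ^ 2 < 1 := by nlinarith
  calc r / (2 * √(1 - r)) = r * (π / 4) / (π / 2 * √(1 - r)) := by
        field_simp
        ring
    _ ≤ r * EB r / ((1 - r) * EK r) :=
        div_le_div₀ (by nlinarith [pi_div_four_le_EB hr, pi_pos])
          (mul_le_mul_of_nonneg_left (pi_div_four_le_EB hr) hr0)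
          (mul_pos (sub_pos.2 hr1) (EK_pos hr)) (one_sub_mul_EK_le hr0 hr1)

theorem f8_eq (hr0 : 0 < r) (hr1 : r < 1) : f8 r = √r * (1 + bkRatio r) := by
  have hr : r ^ 2 < 1 := by nlinarith
  have h1r : 1 - r ≠ 0 := (sub_pos.2 hr1).ne'
  have hs : √r ≠ 0 := (sqrt_pos.2 hr0).ne'
  have hK := (EK_pos hr).ne'
  rw [f8, bkRatio, EE_eq hr]
  field_simp
  rw [sq_sqrt hr0.le]
  ring

theorem f8_strictMonoOn : StrictMonoOn f8 (Ioo 0 1) := by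
  intro x hx y hy hxy
  rw [f8_eq hx.1 hx.2, f8_eq hy.1 hy.2]
  calc √x * (1 + bkRatio x) < √y * (1 + bkRatio x) := by
        gcongr
        · linarith [bkRatio_nonneg hx.1.le hx.2]
        · exact hx.1.le
    _ ≤ √y * (1 + bkRatio y) := by
        gcongr
        exact bkRatio_monotoneOn (Ioo_subset_Ico_self hx) (Ioo_subset_Ico_self hy) hxy.le

theorem tendsto_f8_nhdsGT_zero : Tendsto f8 (𝓝[>] 0) (𝓝 0) := by
  have hupper : Tendsto (fun r ↦ √r / (1 - r)) (𝓝[>] 0) (𝓝 0) := by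
    have h : ContinuousAt (fun r : ℝ ↦ √r / (1 - r)) 0 := by fun_prop (disch := norm_num)
    simpa using h.tendsto.mono_left nhdsWithin_le_nhds
  refine tendsto_of_tendsto_of_tendsto_of_le_of_le' tendsto_const_nhds hupper ?_ ?_ <;>
    filter_upwards [Ioo_mem_nhdsGT one_pos] with r hr <;>
    rw [f8_eq hr.1 hr.2]
  · exact mul_nonneg (sqrt_nonneg r) (by linarith [bkRatio_nonneg hr.1.le hr.2])
  · have h1r : 0 < 1 - r := sub_pos.2 hr.2
    calc √r * (1 + bkRatio r) ≤ √r * (1 + r / (1 - r)) := by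
          gcongr
          exact bkRatio_le hr.1.le hr.2
      _ = √r / (1 - r) := by field_simp; ring

theorem tendsto_f8_nhdsLT_one : Tendsto f8 (𝓝[<] 1) atTop := by
  have hsqrt : Tendsto (fun r ↦ √(1 - r)) (𝓝[<] 1) (𝓝[>] 0) := by
    refine tendsto_nhdsWithin_iff.2 ⟨?_, eventually_nhdsWithin_of_forall fun r hr ↦
      sqrt_pos.2 (sub_pos.2 hr)⟩
    have h := (by fun_prop : Continuous fun r : ℝ ↦ √(1 - r)).tendsto 1
    simpa using h.mono_left nhdsWithin_le_nhds
  have hfactor : Tendsto (fun r ↦ r * √r / 2) (𝓝[<] 1) (𝓝 (1 / 2)) := by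
    have h := (by fun_prop : Continuous fun r : ℝ ↦ r * √r / 2).tendsto 1
    simpa using h.mono_left nhdsWithin_le_nhds
  refine tendsto_atTop_mono' _ ?_
    (hfactor.pos_mul_atTop one_half_pos (tendsto_inv_nhdsGT_zero.comp hsqrt))
  filter_upwards [Ioo_mem_nhdsLT one_pos] with r hr
  rw [f8_eq hr.1 hr.2]
  calc r * √r / 2 * (√(1 - r))⁻¹ = √r * (r / (2 * √(1 - r))) := by ring
    _ ≤ √r * bkRatio r := by gcongr; exact le_bkRatio hr.1.le hr.2
    _ ≤ √r * (1 + bkRatio r) := by gcongr; linarith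

end Ratio

end EllipticIntegral

theorem f8_properties :
    StrictMonoOn
      (fun r => (EE r - (1 - r) * EK r) / (Real.sqrt r * (1 - r) * EK r))
      (Ioo (0:ℝ) 1) ∧
    Tendsto (fun r => (EE r - (1 - r) * EK r) / (Real.sqrt r * (1 - r) * EK r))
      (nhdsWithin 0 (Ioi (0:ℝ))) (nhds 0) ∧
    Tendsto (fun r => (EE r - (1 - r) * EK r) / (Real.sqrt r * (1 - r) * EK r))
      (nhdsWithin 1 (Iio (1:ℝ))) atTop :=
  ⟨EllipticIntegral.f8_strictMonoOn, EllipticIntegral.tendsto_f8_nhdsGT_zero,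
    EllipticIntegral.tendsto_f8_nhdsLT_one⟩
end
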